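/- Assume condition (5) (E|ε_1|^α < ∞ for some α ≥ 2), condition (6) (Σ_{k=i}^∞ c_k² = O(i^{−2/ρ}(log i)^{−3}) for some ρ ∈ (0,1/2)) and condition (7) (sup_{x∈ℝ}(f_ε(x) + |f_ε′(x)| + |f_ε″(x)|) < ∞). Then there exists a finite constant C such that for all n ≥ 1 and all −∞ < x < y < ∞, E[ sup_{x ≤ u ≤ y} |f̂_n*(u) − f_n*(u)|² ] ≤ C/n. -/

import Mathlib

/-!
Since `f_ε` has a bounded derivative it is `K`-Lipschitz, so uniformly in `u`,
`|f̂_n*(u) − f_n*(u)| ≤ K n⁻¹ ∑ᵢ |X_{i,i−1} − X̂_{i,i−1}|`, and by Cauchy–Schwarz the squared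
supremum is at most `K² n⁻¹ ∑ᵢ (X_{i,i−1} − X̂_{i,i−1})²`. The truncation error is dominated by
`∑_{k ≥ ⌈i^ρ⌉} |c_k| |ε_{i−k}|`, whose second moment is at most `E ε² · (∑_{k ≥ ⌈i^ρ⌉} |c_k|)²`.
Condition (6) gives `|c_k| = O(k^{−1/ρ})`, hence `∑_k |c_k| k^s < ∞` for some
`s ∈ (1/(2ρ), 1/ρ − 1)` (an interval that is nonempty because `ρ < 1/2`), and then
`∑_{k ≥ ⌈i^ρ⌉} |c_k| ≤ i^{−ρs} ∑_k |c_k| k^s` is square-summable in `i` since `2ρs > 1`.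
-/

open MeasureTheory ProbabilityTheory Filter Set

noncomputable section

namespace BKpaper

variable {Ω : Type*} [MeasureSpace Ω]

/-- The linear process `X_i = ∑_{k≥0} c_k ε_{i−k}`. -/
def Xproc (c : ℕ → ℝ) (ε : ℤ → Ω → ℝ) (i : ℤ) (ω : Ω) : ℝ :=
  ∑' k : ℕ, c k * ε (i - k) ω

/-- `X_{i,i−1} = ∑_{k≥1} c_k ε_{i−k}`. -/
def Xlag (c : ℕ → ℝ) (ε : ℤ → Ω → ℝ) (i : ℤ) (ω : Ω) : ℝ :=
  ∑' k : ℕ, if 1 ≤ k then c k * ε (i - k) ω else 0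

/-- Distribution function of a random variable. -/
def cdf (X : Ω → ℝ) (x : ℝ) : ℝ := ((ℙ : Measure Ω) {ω | X ω ≤ x}).toReal

/-- Empirical distribution function based on `X_1, …, X_n`. -/
def empCdf (X : ℤ → Ω → ℝ) (n : ℕ) (x : ℝ) (ω : Ω) : ℝ :=
  (n : ℝ)⁻¹ * ∑ i ∈ Finset.Icc 1 n, (if X (i : ℤ) ω ≤ x then (1:ℝ) else 0)

/-- (Left-continuous generalized inverse) quantile function. -/
def quant (G : ℝ → ℝ) (y : ℝ) : ℝ := sInf {x | y ≤ G x}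

/-- The empirical quantile function `Q_n`. -/
def empQuant (X : ℤ → Ω → ℝ) (n : ℕ) (y : ℝ) (ω : Ω) : ℝ :=
  quant (fun x => empCdf X n x ω) y

/-- The general quantile process `q_n(y) = √n (Q(y) − Q_n(y))`. -/
def qn (X : ℤ → Ω → ℝ) (F : ℝ → ℝ) (n : ℕ) (y : ℝ) (ω : Ω) : ℝ :=
  Real.sqrt n * (quant F y - empQuant X n y ω)

/-- The general empirical process `β_n(x) = √n (F_n(x) − F(x))`. -/
def betan (X : ℤ → Ω → ℝ) (F : ℝ → ℝ) (n : ℕ) (x : ℝ) (ω : Ω) : ℝ :=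
  Real.sqrt n * (empCdf X n x ω - F x)

/-- The uniform empirical distribution `E_n` of `U_i = F(X_i)`. -/
def En (X : ℤ → Ω → ℝ) (F : ℝ → ℝ) (n : ℕ) (x : ℝ) (ω : Ω) : ℝ :=
  empCdf (fun i ω => F (X i ω)) n x ω

/-- The uniform empirical process `α_n(x) = √n (E_n(x) − x)`. -/
def alphan (X : ℤ → Ω → ℝ) (F : ℝ → ℝ) (n : ℕ) (x : ℝ) (ω : Ω) : ℝ :=
  Real.sqrt n * (En X F n x ω - x)

/-- The uniform empirical quantile function `U_n`. -/
def uniQuant (X : ℤ → Ω → ℝ) (F : ℝ → ℝ) (n : ℕ) (y : ℝ) (ω : Ω) : ℝ :=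
  quant (fun x => En X F n x ω) y

/-- The uniform quantile process `u_n(y) = √n (y − U_n(y))`. -/
def un (X : ℤ → Ω → ℝ) (F : ℝ → ℝ) (n : ℕ) (y : ℝ) (ω : Ω) : ℝ :=
  Real.sqrt n * (y - uniQuant X F n y ω)

/-- `Y_i(x) = F_ε(x − X_{i,i−1}) − F(x)`. -/
def Yproc (c : ℕ → ℝ) (ε : ℤ → Ω → ℝ) (F : ℝ → ℝ) (i : ℤ) (x : ℝ) (ω : Ω) : ℝ :=
  cdf (ε 0) (x - Xlag c ε i ω) - F x

/-- `N_n(x) = n⁻¹ ∑_{i=1}^n Y_i(x)`. -/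
def Nn (c : ℕ → ℝ) (ε : ℤ → Ω → ℝ) (F : ℝ → ℝ) (n : ℕ) (x : ℝ) (ω : Ω) : ℝ :=
  (n : ℝ)⁻¹ * ∑ i ∈ Finset.Icc 1 n, Yproc c ε F (i : ℤ) x ω

/-- Truncation point `⌈i^ρ⌉`. -/
def trunc (ρ : ℝ) (i : ℕ) : ℕ := ⌈(i : ℝ) ^ ρ⌉₊

/-- Truncated `X̂_i = ∑_{k=0}^{⌈i^ρ⌉−1} c_k ε_{i−k}`. -/
def XprocHat (c : ℕ → ℝ) (ε : ℤ → Ω → ℝ) (ρ : ℝ) (i : ℕ) (ω : Ω) : ℝ :=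
  ∑ k ∈ Finset.range (trunc ρ i), c k * ε ((i : ℤ) - k) ω

/-- Truncated `X̂_{i,i−1} = ∑_{k=1}^{⌈i^ρ⌉−1} c_k ε_{i−k}`. -/
def XlagHat (c : ℕ → ℝ) (ε : ℤ → Ω → ℝ) (ρ : ℝ) (i : ℕ) (ω : Ω) : ℝ :=
  ∑ k ∈ Finset.Ico 1 (trunc ρ i), c k * ε ((i : ℤ) - k) ω

/-- `F̂_i(x) = E F_ε(x − X̂_{i,i−1})`. -/
def FHat (c : ℕ → ℝ) (ε : ℤ → Ω → ℝ) (ρ : ℝ) (i : ℕ) (x : ℝ) : ℝ :=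
  ∫ ω, cdf (ε 0) (x - XlagHat c ε ρ i ω) ∂(ℙ : Measure Ω)

/-- `Ŷ_i(x) = F_ε(x − X̂_{i,i−1}) − F̂_i(x)`. -/
def YHat (c : ℕ → ℝ) (ε : ℤ → Ω → ℝ) (ρ : ℝ) (i : ℕ) (x : ℝ) (ω : Ω) : ℝ :=
  cdf (ε 0) (x - XlagHat c ε ρ i ω) - FHat c ε ρ i x

/-- `N̂_n(x) = n⁻¹ ∑_{i=1}^n Ŷ_i(x)`. -/
def NHat (c : ℕ → ℝ) (ε : ℤ → Ω → ℝ) (ρ : ℝ) (n : ℕ) (x : ℝ) (ω : Ω) : ℝ :=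
  (n : ℝ)⁻¹ * ∑ i ∈ Finset.Icc 1 n, YHat c ε ρ i x ω

/-- The conditional empirical density `f_n*(u) = n⁻¹ ∑_{i=1}^n f_ε(u − X_{i,i−1})`. -/
def fnStar (c : ℕ → ℝ) (ε : ℤ → Ω → ℝ) (fε : ℝ → ℝ) (n : ℕ) (u : ℝ) (ω : Ω) : ℝ :=
  (n : ℝ)⁻¹ * ∑ i ∈ Finset.Icc 1 n, fε (u - Xlag c ε (i : ℤ) ω)

/-- Its truncated version `f̂_n*(u) = n⁻¹ ∑_{i=1}^n f_ε(u − X̂_{i,i−1})`. -/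
def fnStarHat (c : ℕ → ℝ) (ε : ℤ → Ω → ℝ) (fε : ℝ → ℝ) (ρ : ℝ) (n : ℕ) (u : ℝ) (ω : Ω) : ℝ :=
  (n : ℝ)⁻¹ * ∑ i ∈ Finset.Icc 1 n, fε (u - XlagHat c ε ρ i ω)

/-- `Γ(x,y) = E Y_0(x)Y_0(y) + ∑_{i≥1} (E Y_0(x)Y_i(y) + E Y_0(y)Y_i(x))`. -/
def Gamma (c : ℕ → ℝ) (ε : ℤ → Ω → ℝ) (F : ℝ → ℝ) (x y : ℝ) : ℝ :=
  (∫ ω, Yproc c ε F 0 x ω * Yproc c ε F 0 y ω ∂(ℙ : Measure Ω)) +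
    ∑' i : ℕ,
      ((∫ ω, Yproc c ε F 0 x ω * Yproc c ε F (i + 1 : ℕ) y ω ∂(ℙ : Measure Ω)) +
        (∫ ω, Yproc c ε F 0 y ω * Yproc c ε F (i + 1 : ℕ) x ω ∂(ℙ : Measure Ω)))

/-- `Ñ_n(y) = n⁻¹ ∑_{i=1}^n (F_ε(Q(y) − X_{i,i−1}) − y)`. -/
def Ntilde (c : ℕ → ℝ) (ε : ℤ → Ω → ℝ) (F : ℝ → ℝ) (n : ℕ) (y : ℝ) (ω : Ω) : ℝ :=
  (n : ℝ)⁻¹ * ∑ i ∈ Finset.Icc 1 n, (cdf (ε 0) (quant F y - Xlag c ε (i : ℤ) ω) - y)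

/-- `Ñ_n′(y) = n⁻¹ ∑_{i=1}^n (Q′(y) f_ε(Q(y) − X_{i,i−1}) − 1)`. -/
def NtildeDeriv (c : ℕ → ℝ) (ε : ℤ → Ω → ℝ) (F : ℝ → ℝ) (fε Q' : ℝ → ℝ) (n : ℕ)
    (y : ℝ) (ω : Ω) : ℝ :=
  (n : ℝ)⁻¹ * ∑ i ∈ Finset.Icc 1 n, (Q' y * fε (quant F y - Xlag c ε (i : ℤ) ω) - 1)

/-- The `L^α` norm `‖Z‖_α = (E|Z|^α)^{1/α}`. -/
def Lnorm (α : ℝ) (Z : Ω → ℝ) : ℝ := (∫ ω, |Z ω| ^ α ∂(ℙ : Measure Ω)) ^ (1 / α)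

/-- Tail sum `∑_{k ≥ t} c_k²`. -/
def tailSq (c : ℕ → ℝ) (t : ℝ) : ℝ := ∑' k : ℕ, if t ≤ (k : ℝ) then (c k) ^ 2 else 0

/-- Tail sum `∑_{k ≥ t} |c_k|^α`. -/
def tailPow (c : ℕ → ℝ) (α t : ℝ) : ℝ := ∑' k : ℕ, if t ≤ (k : ℝ) then |c k| ^ α else 0

/-- `Z_n = O_{a.s.}(r_n)`. -/
def Oas (Z : ℕ → Ω → ℝ) (r : ℕ → ℝ) : Prop :=
  ∃ C : ℝ, ∀ᵐ ω ∂(ℙ : Measure Ω),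
    Filter.limsup (fun n => |Z n ω| / r n) Filter.atTop ≤ C

/-- `Z_n = o_{a.s.}(r_n)`. -/
def oas (Z : ℕ → Ω → ℝ) (r : ℕ → ℝ) : Prop :=
  ∀ᵐ ω ∂(ℙ : Measure Ω),
    Filter.Tendsto (fun n => |Z n ω| / r n) Filter.atTop (nhds 0)

/-- The Bahadur–Kiefer rate `b_n = n^{−1/4}(log n)^{1/2}(log log n)^{1/4}`. -/
def bnRate (n : ℕ) : ℝ :=
  (n : ℝ) ^ (-(1/4 : ℝ)) * Real.log n ^ (1/2 : ℝ) * Real.log (Real.log n) ^ (1/4 : ℝ)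

/-- `λ_n = n^{−1/2}(2 log log n)^{1/2}`. -/
def lamRate (n : ℕ) : ℝ :=
  (n : ℝ) ^ (-(1/2 : ℝ)) * (2 * Real.log (Real.log n)) ^ (1/2 : ℝ)

/-- `l_q(n) = (log n)^{1/q} (log log n)^{2/q}`. -/
def lq (q : ℝ) (n : ℕ) : ℝ :=
  Real.log n ^ (1/q) * Real.log (Real.log n) ^ (2/q)

/-- The sequence `ε` is i.i.d. -/
def IID (ε : ℤ → Ω → ℝ) : Prop :=
  (∀ i, Measurable (ε i)) ∧
    iIndepFun ε (ℙ : Measure Ω) ∧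
    ∀ i, IdentDistrib (ε i) (ε 0) (ℙ : Measure Ω) (ℙ : Measure Ω)

/-- Condition (5): `E|ε|^α < ∞`. -/
def Cond5 (ε : ℤ → Ω → ℝ) (α : ℝ) : Prop :=
  2 ≤ α ∧ Integrable (fun ω => |ε 0 ω| ^ α) (ℙ : Measure Ω)

/-- Condition (6): `∑_{k=i}^∞ c_k² = O(i^{−2/ρ} (log i)^{−3})`. -/
def Cond6 (c : ℕ → ℝ) (ρ : ℝ) : Prop :=
  ρ ∈ Set.Ioo (0:ℝ) (1/2) ∧
    ∃ C : ℝ, ∀ i : ℕ, 2 ≤ i →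
      tailSq c (i : ℝ) ≤ C * (i : ℝ) ^ (-(2/ρ)) * Real.log i ^ (-(3:ℝ))

/-- Condition (7): `ε` has a density `f_ε`, twice differentiable, with
`sup_x (f_ε(x) + |f_ε′(x)| + |f_ε″(x)|) < ∞`. -/
def Cond7 (ε : ℤ → Ω → ℝ) (fε fε' fε'' : ℝ → ℝ) : Prop :=
  (∀ x, 0 ≤ fε x) ∧
    Measure.map (ε 0) (ℙ : Measure Ω) =
      MeasureTheory.volume.withDensity (fun x => ENNReal.ofReal (fε x)) ∧
    (∀ x, HasDerivAt fε (fε' x) x) ∧ (∀ x, HasDerivAt fε' (fε'' x) x) ∧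
    ∃ M : ℝ, ∀ x, fε x + |fε' x| + |fε'' x| ≤ M

/-- The basic setup: `ε` i.i.d., `c₀ = 1`, `∑|c_k| < ∞`, `F` the (continuous)
distribution function of `X_1`. -/
def Setup (ε : ℤ → Ω → ℝ) (c : ℕ → ℝ) (F : ℝ → ℝ) : Prop :=
  IID ε ∧ c 0 = 1 ∧ (Summable fun k => |c k|) ∧
    F = cdf (Xproc c ε 1) ∧ Continuous F

/-- `f` is the density of `F` (as derivative of the distribution function). -/
def IsDensity (F f : ℝ → ℝ) : Prop :=
  (∀ x, 0 ≤ f x) ∧ ∀ x, HasDerivAt F (f x) x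

/-- Kiefer conditions (K1)–(K2) on the interval `(a,b) ⊆ (0,1)`:
`f′∘Q` exists and is bounded on `(a,b)`, and `f∘Q` is bounded away from `0`. -/
def Kiefer (F f f' : ℝ → ℝ) (a b : ℝ) : Prop :=
  (∀ y ∈ Set.Ioo a b, HasDerivAt f (f' (quant F y)) (quant F y)) ∧
    (∃ M : ℝ, ∀ y ∈ Set.Ioo a b, |f' (quant F y)| ≤ M) ∧
    ∃ δ : ℝ, 0 < δ ∧ ∀ y ∈ Set.Ioo a b, δ ≤ f (quant F y)

/-- A function slowly varying at infinity. -/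
def SlowlyVarying (L : ℝ → ℝ) : Prop :=
  ∀ l : ℝ, 0 < l → Tendsto (fun t => L (l * t) / L t) atTop (nhds 1)

/-- Csörgő–Révész conditions (CsR1)–(CsR4) for `F` with density `f`,
derivative `f'` and tail exponents `γ₁, γ₂`. -/
def CsorgoRevesz (F f f' : ℝ → ℝ) (γ₁ γ₂ : ℝ) : Prop :=
  (∀ x, 0 < F x → F x < 1 → HasDerivAt f (f' x) x) ∧
  (∀ x, 0 < F x → F x < 1 → 0 < f x) ∧
  0 < γ₁ ∧ 0 < γ₂ ∧
  (∃ L₁ : ℝ → ℝ, SlowlyVarying L₁ ∧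
    Tendsto (fun y => f (quant F y) / (y ^ γ₁ * L₁ (1 / y)))
      (nhdsWithin 0 (Set.Ioi 0)) (nhds 1)) ∧
  (∃ L₂ : ℝ → ℝ, SlowlyVarying L₂ ∧
    Tendsto (fun y => f (quant F y) / ((1 - y) ^ γ₂ * L₂ (1 / (1 - y))))
      (nhdsWithin 1 (Set.Iio 1)) (nhds 1)) ∧
  (∃ A : ℝ, Tendsto (fun y => f (quant F y)) (nhdsWithin 0 (Set.Ioi 0)) (nhds A) ∧
    (0 < A ∨ (A = 0 ∧ ∃ η : ℝ, 0 < η ∧ MonotoneOn (fun y => f (quant F y)) (Set.Ioo 0 η)))) ∧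
  (∃ B : ℝ, Tendsto (fun y => f (quant F y)) (nhdsWithin 1 (Set.Iio 1)) (nhds B) ∧
    (0 < B ∨ (B = 0 ∧ ∃ η : ℝ, 0 < η ∧
      AntitoneOn (fun y => f (quant F y)) (Set.Ioo (1 - η) 1))))
end BKpaper

open scoped ENNReal NNReal

theorem ENNReal.two_mul_le_add_sq (a b : ℝ≥0∞) : 2 * a * b ≤ a ^ 2 + b ^ 2 := by
  rcases eq_top_or_lt_top a with rfl | ha
  · simp
  rcases eq_top_or_lt_top b with rfl | hb
  · simp
  lift a to ℝ≥0 using ha.ne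
  lift b to ℝ≥0 using hb.ne
  exact_mod_cast _root_.two_mul_le_add_sq a b

namespace MeasureTheory

variable {α : Type*} [MeasurableSpace α] {μ : Measure α}

theorem lintegral_mul_le_of_lintegral_sq_le {f g : α → ℝ≥0∞} (hf : AEMeasurable f μ)
    {V : ℝ≥0∞} (hfV : ∫⁻ a, f a ^ 2 ∂μ ≤ V) (hgV : ∫⁻ a, g a ^ 2 ∂μ ≤ V) :
    ∫⁻ a, f a * g a ∂μ ≤ V := by
  rw [← ENNReal.mul_le_mul_iff_right two_ne_zero ENNReal.ofNat_ne_top,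
    ← lintegral_const_mul' _ _ ENNReal.ofNat_ne_top]
  calc ∫⁻ a, 2 * (f a * g a) ∂μ ≤ ∫⁻ a, f a ^ 2 + g a ^ 2 ∂μ :=
        lintegral_mono fun a => (mul_assoc 2 (f a) (g a)).symm ▸ ENNReal.two_mul_le_add_sq _ _
    _ ≤ V + V := (lintegral_add_left' (hf.pow_const 2) _).trans_le (add_le_add hfV hgV)
    _ = 2 * V := (two_mul V).symm

theorem lintegral_sq_tsum_mul_le {ι : Type*} [Countable ι] {ξ : ι → α → ℝ≥0∞}
    (hξ : ∀ k, AEMeasurable (ξ k) μ) {V : ℝ≥0∞} (hV : ∀ k, ∫⁻ a, ξ k a ^ 2 ∂μ ≤ V)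
    (w : ι → ℝ≥0∞) :
    ∫⁻ a, (∑' k, w k * ξ k a) ^ 2 ∂μ ≤ V * (∑' k, w k) ^ 2 := by
  have hexpand : ∀ a, (∑' k, w k * ξ k a) ^ 2 = ∑' k, ∑' l, w k * w l * (ξ k a * ξ l a) := by
    intro a
    simp_rw [sq, ← ENNReal.tsum_mul_right, ← ENNReal.tsum_mul_left]
    exact tsum_congr fun k => tsum_congr fun l => by ring
  have hmeas : ∀ k l, AEMeasurable (fun a => w k * w l * (ξ k a * ξ l a)) μ :=
    fun k l => ((hξ k).mul (hξ l)).const_mul _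
  calc ∫⁻ a, (∑' k, w k * ξ k a) ^ 2 ∂μ
      = ∑' k, ∑' l, w k * w l * ∫⁻ a, ξ k a * ξ l a ∂μ := by
        simp_rw [hexpand]
        rw [lintegral_tsum fun k => AEMeasurable.tsum (hmeas k)]
        refine tsum_congr fun k => ?_
        rw [lintegral_tsum (hmeas k)]
        exact tsum_congr fun l => lintegral_const_mul'' _ ((hξ k).mul (hξ l))
    _ ≤ ∑' k, ∑' l, w k * w l * V := by
        gcongr with k l
        exact lintegral_mul_le_of_lintegral_sq_le (hξ k) (hV k) (hV l)
    _ = V * (∑' k, w k) ^ 2 := by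
        simp_rw [sq, ← ENNReal.tsum_mul_right, ← ENNReal.tsum_mul_left]
        exact tsum_congr fun k => tsum_congr fun l => by ring

-- `f` need not be measurable: a non-integrable function has Bochner integral `0`.
theorem integral_le_of_lintegral_ofReal_le {f : α → ℝ} (hf : 0 ≤ f) {B : ℝ} (hB : 0 ≤ B)
    (h : ∫⁻ a, ENNReal.ofReal (f a) ∂μ ≤ ENNReal.ofReal B) : ∫ a, f a ∂μ ≤ B := by
  refine (le_abs_self _).trans ((norm_integral_le_lintegral_norm f).trans ?_)
  simp_rw [Real.norm_of_nonneg (hf _)]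
  exact ENNReal.toReal_le_of_le_ofReal hB h

end MeasureTheory

theorem rpow_mul_tsum_abs_nat_add_le {c : ℕ → ℝ} {s : ℝ} (hs : 0 ≤ s)
    (hc : Summable fun k => |c k| * (k : ℝ) ^ s) (m : ℕ) :
    (m : ℝ) ^ s * ∑' k, |c (k + m)| ≤ ∑' k, |c k| * (k : ℝ) ^ s := by
  have hcm := (summable_nat_add_iff m).2 hc
  have hle : ∀ k, (m : ℝ) ^ s * |c (k + m)| ≤ |c (k + m)| * ((k + m : ℕ) : ℝ) ^ s := by
    intro k
    rw [mul_comm]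
    gcongr
    exact_mod_cast Nat.le_add_left m k
  rw [← tsum_mul_left]
  calc ∑' k, (m : ℝ) ^ s * |c (k + m)| ≤ ∑' k, |c (k + m)| * ((k + m : ℕ) : ℝ) ^ s :=
        Summable.tsum_le_tsum hle (hcm.of_nonneg_of_le (fun k => by positivity) hle) hcm
    _ ≤ ∑' k, |c k| * (k : ℝ) ^ s := by
        rw [← hc.sum_add_tsum_nat_add m]
        exact le_add_of_nonneg_left (Finset.sum_nonneg fun k _ => by positivity)

theorem summable_abs_mul_rpow_of_abs_le {c : ℕ → ℝ} {K r s : ℝ}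
    (hc : ∀ k, 2 ≤ k → |c k| ≤ K * (k : ℝ) ^ (-r)) (hs : s - r < -1) :
    Summable fun k => |c k| * (k : ℝ) ^ s := by
  rw [← summable_nat_add_iff 2]
  refine Summable.of_nonneg_of_le (fun k => by positivity) (fun k => ?_)
    (((summable_nat_add_iff 2).2 (Real.summable_nat_rpow.2 hs)).mul_left K)
  have hk : (0 : ℝ) < (k + 2 : ℕ) := by positivity
  calc |c (k + 2)| * ((k + 2 : ℕ) : ℝ) ^ s
      ≤ K * ((k + 2 : ℕ) : ℝ) ^ (-r) * ((k + 2 : ℕ) : ℝ) ^ s := by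
        gcongr
        exact hc _ (Nat.le_add_left 2 k)
    _ = K * ((k + 2 : ℕ) : ℝ) ^ (s - r) := by
        rw [mul_assoc, ← Real.rpow_add hk, neg_add_eq_sub]

namespace BKpaper

section

variable {Ω : Type*} {c : ℕ → ℝ} {ε : ℤ → Ω → ℝ} {ρ : ℝ}

theorem one_le_trunc {i : ℕ} (hi : 1 ≤ i) : 1 ≤ trunc ρ i :=
  Nat.one_le_iff_ne_zero.2 (Nat.ceil_pos.2 (Real.rpow_pos_of_pos (by exact_mod_cast hi) ρ)).ne'

theorem rpow_mul_tsum_abs_nat_add_trunc_le {s : ℝ} (hs : 0 ≤ s)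
    (hc : Summable fun k => |c k| * (k : ℝ) ^ s) (i : ℕ) :
    (i : ℝ) ^ (ρ * s) * ∑' k, |c (k + trunc ρ i)| ≤ ∑' k, |c k| * (k : ℝ) ^ s :=
  calc (i : ℝ) ^ (ρ * s) * ∑' k, |c (k + trunc ρ i)|
      = ((i : ℝ) ^ ρ) ^ s * ∑' k, |c (k + trunc ρ i)| := by rw [Real.rpow_mul (Nat.cast_nonneg i)]
    _ ≤ (trunc ρ i : ℝ) ^ s * ∑' k, |c (k + trunc ρ i)| := by
        gcongr
        exact Nat.le_ceil _
    _ ≤ ∑' k, |c k| * (k : ℝ) ^ s := rpow_mul_tsum_abs_nat_add_le hs hc _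

theorem Cond6.exists_abs_le_rpow (h6 : Cond6 c ρ) (hc : Summable fun k => |c k|) :
    ∃ K, ∀ k, 2 ≤ k → |c k| ≤ K * (k : ℝ) ^ (-(1 / ρ)) := by
  obtain ⟨-, C, hC⟩ := h6
  have hsq : Summable fun k => c k ^ 2 :=
    (hc.mul_left (∑' j, |c j|)).of_nonneg_of_le (fun k => sq_nonneg _) fun k => by
      rw [← sq_abs, sq]
      exact mul_le_mul_of_nonneg_right (hc.le_tsum k fun j _ => abs_nonneg _) (abs_nonneg _)
  set C' := max C 0 * Real.log 2 ^ (-(3 : ℝ))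
  refine ⟨√C', fun k hk => sq_le_sq₀ (abs_nonneg _) (by positivity) |>.1 ?_⟩
  rw [sq_abs]
  have hk2 : (2 : ℝ) ≤ k := by exact_mod_cast hk
  have hpow : (k : ℝ) ^ (-(2 / ρ)) = ((k : ℝ) ^ (-(1 / ρ))) ^ 2 := by
    rw [← Real.rpow_mul_natCast (by positivity)]
    ring_nf
  have hlog : Real.log k ^ (-(3 : ℝ)) ≤ Real.log 2 ^ (-(3 : ℝ)) :=
    Real.rpow_le_rpow_of_nonpos (Real.log_pos one_lt_two) (Real.log_le_log two_pos hk2)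
      (by norm_num)
  have htail : c k ^ 2 ≤ tailSq c k := by
    have hs : Summable fun j : ℕ => if (k : ℝ) ≤ j then c j ^ 2 else 0 :=
      hsq.of_nonneg_of_le (fun j => by positivity) fun j => by split_ifs <;> simp [sq_nonneg]
    simpa [tailSq] using hs.le_tsum k fun j _ => by positivity
  calc c k ^ 2 ≤ C * (k : ℝ) ^ (-(2 / ρ)) * Real.log k ^ (-(3 : ℝ)) := htail.trans (hC k hk)
    _ ≤ max C 0 * (k : ℝ) ^ (-(2 / ρ)) * Real.log 2 ^ (-(3 : ℝ)) := by
        have : 0 ≤ Real.log k ^ (-(3 : ℝ)) := Real.rpow_nonneg (Real.log_nonneg (by linarith)) _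
        gcongr
        exact le_max_left C 0
    _ = (√C' * (k : ℝ) ^ (-(1 / ρ))) ^ 2 := by
        rw [mul_pow, Real.sq_sqrt (by positivity), ← hpow]
        ring

theorem Cond6.summable_sq_tsum_abs_nat_add_trunc (h6 : Cond6 c ρ)
    (hc : Summable fun k => |c k|) :
    Summable fun i => (∑' k, |c (k + trunc ρ i)|) ^ 2 := by
  obtain ⟨K, hK⟩ := h6.exists_abs_le_rpow hc
  obtain ⟨⟨hρ0, hρ1⟩, -⟩ := h6
  have hgap : 1 / (2 * ρ) < 1 / ρ - 1 := by
    have h1 : 1 < 1 / (2 * ρ) := by rw [lt_div_iff₀ (by positivity)]; linarith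
    have h2 : 1 / ρ - 1 - 1 / (2 * ρ) = 1 / (2 * ρ) - 1 := by field_simp; ring
    linarith
  obtain ⟨s, hs1, hs2⟩ := exists_between hgap
  have hs0 : 0 ≤ s := le_trans (by positivity) hs1.le
  have h2ρs : 1 < ρ * s * 2 := by
    have := (div_lt_iff₀ (by positivity : (0 : ℝ) < 2 * ρ)).1 hs1
    linarith
  have hw := summable_abs_mul_rpow_of_abs_le hK (show s - 1 / ρ < -1 by linarith)
  set D := ∑' k, |c k| * (k : ℝ) ^ s
  rw [← summable_nat_add_iff 1]
  refine Summable.of_nonneg_of_le (fun i => sq_nonneg _) (fun i => ?_)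
    (((summable_nat_add_iff 1).2 (Real.summable_nat_rpow_inv.2 h2ρs)).mul_left (D ^ 2))
  have hi : (0 : ℝ) < (i + 1 : ℕ) := by positivity
  rw [Real.rpow_mul hi.le, Real.rpow_two, ← div_eq_mul_inv, le_div_iff₀ (by positivity),
    ← mul_pow]
  exact pow_le_pow_left₀ (by positivity) ((mul_comm _ _).trans_le
    (rpow_mul_tsum_abs_nat_add_trunc_le hs0 hw (i + 1))) 2

theorem Xlag_sub_XlagHat_eq {i : ℕ} (hi : 1 ≤ i) {ω : Ω}
    (hs : Summable fun k => c (k + trunc ρ i) * ε ((i : ℤ) - (k + trunc ρ i : ℕ)) ω) :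
    Xlag c ε i ω - XlagHat c ε ρ i ω =
      ∑' k, c (k + trunc ρ i) * ε ((i : ℤ) - (k + trunc ρ i : ℕ)) ω := by
  have ht := one_le_trunc (ρ := ρ) hi
  set f : ℕ → ℝ := fun k => if 1 ≤ k then c k * ε ((i : ℤ) - k) ω else 0
  have htail : ∀ k, f (k + trunc ρ i) = c (k + trunc ρ i) * ε ((i : ℤ) - (k + trunc ρ i : ℕ)) ω :=
    fun k => if_pos (by omega)
  have hhead : ∑ k ∈ Finset.range (trunc ρ i), f k = XlagHat c ε ρ i ω := by
    rw [Finset.range_eq_Ico, Finset.sum_eq_sum_Ico_succ_bot (by omega), XlagHat]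
    exact (zero_add _).trans (Finset.sum_congr rfl fun k hk => if_pos (Finset.mem_Ico.1 hk).1)
  have hf : Summable f := (summable_nat_add_iff (trunc ρ i)).1 (by simpa only [htail] using hs)
  rw [Xlag, ← hf.sum_add_tsum_nat_add (trunc ρ i), hhead, add_sub_cancel_left]
  exact tsum_congr htail

def truncTail (c : ℕ → ℝ) (ε : ℤ → Ω → ℝ) (ρ : ℝ) (i : ℕ) (ω : Ω) : ℝ≥0∞ :=
  ∑' k, ‖c (k + trunc ρ i)‖ₑ * ‖ε ((i : ℤ) - (k + trunc ρ i : ℕ)) ω‖ₑ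

theorem enorm_Xlag_sub_XlagHat_le_truncTail {i : ℕ} (hi : 1 ≤ i) (ω : Ω) :
    ‖Xlag c ε i ω - XlagHat c ε ρ i ω‖ₑ ≤ truncTail c ε ρ i ω := by
  by_cases htop : truncTail c ε ρ i ω = ⊤
  · exact htop ▸ le_top
  simp_rw [truncTail, ← enorm_mul] at htop ⊢
  rw [Xlag_sub_XlagHat_eq hi (Summable.of_norm (tsum_enorm_ne_top_iff_summable_norm.1 htop))]
  exact enorm_tsum_le_tsum_enorm

theorem measurable_truncTail [MeasurableSpace Ω] (hm : ∀ j, Measurable (ε j)) (i : ℕ) :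
    Measurable (truncTail c ε ρ i) :=
  Measurable.tsum fun _ => measurable_const.mul (hm _).enorm

theorem lintegral_truncTail_sq_le [MeasureSpace Ω] (hm : ∀ j, Measurable (ε j))
    (hid : ∀ j, IdentDistrib (ε j) (ε 0) (ℙ : Measure Ω) (ℙ : Measure Ω))
    (hc : Summable fun k => |c k|) (i : ℕ) :
    ∫⁻ ω, truncTail c ε ρ i ω ^ 2 ≤
      (∫⁻ ω, ‖ε 0 ω‖ₑ ^ 2) * ENNReal.ofReal ((∑' k, |c (k + trunc ρ i)|) ^ 2) := by
  have hsum : ∑' k, ‖c (k + trunc ρ i)‖ₑ = ENNReal.ofReal (∑' k, |c (k + trunc ρ i)|) := by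
    simp_rw [Real.enorm_eq_ofReal_abs]
    exact (ENNReal.ofReal_tsum_of_nonneg (fun k => abs_nonneg _)
      ((summable_nat_add_iff _).2 hc)).symm
  rw [ENNReal.ofReal_pow (tsum_nonneg fun k => abs_nonneg _), ← hsum]
  exact lintegral_sq_tsum_mul_le (fun k => (hm _).enorm.aemeasurable)
    (fun _ => ((hid _).comp (measurable_enorm.pow_const 2)).lintegral_eq.le) _

theorem abs_fnStarHat_sub_fnStar_le {fε : ℝ → ℝ} {K : ℝ≥0} (hf : LipschitzWith K fε) (n : ℕ)
    (u : ℝ) (ω : Ω) :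
    |fnStarHat c ε fε ρ n u ω - fnStar c ε fε n u ω| ≤
      K * ((n : ℝ)⁻¹ * ∑ i ∈ Finset.Icc 1 n, |Xlag c ε i ω - XlagHat c ε ρ i ω|) := by
  rw [fnStarHat, fnStar, ← mul_sub, ← Finset.sum_sub_distrib, abs_mul, abs_inv, Nat.abs_cast,
    mul_left_comm, Finset.mul_sum]
  gcongr
  refine (Finset.abs_sum_le_sum_abs _ _).trans (Finset.sum_le_sum fun i _ => ?_)
  have h := hf.dist_le_mul (u - XlagHat c ε ρ i ω) (u - Xlag c ε i ω)
  rwa [Real.dist_eq, Real.dist_eq, sub_sub_sub_cancel_left] at h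

theorem sq_iSup_abs_fnStarHat_sub_fnStar_le {fε : ℝ → ℝ} {K : ℝ≥0} (hf : LipschitzWith K fε)
    (n : ℕ) (s : Set ℝ) (ω : Ω) :
    (⨆ u ∈ s, |fnStarHat c ε fε ρ n u ω - fnStar c ε fε n u ω|) ^ 2 ≤
      K ^ 2 / n * ∑ i ∈ Finset.Icc 1 n, (Xlag c ε i ω - XlagHat c ε ρ i ω) ^ 2 := by
  set A := ∑ i ∈ Finset.Icc 1 n, |Xlag c ε i ω - XlagHat c ε ρ i ω|
  have hsup : (⨆ u ∈ s, |fnStarHat c ε fε ρ n u ω - fnStar c ε fε n u ω|) ≤ K * ((n : ℝ)⁻¹ * A) :=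
    Real.iSup_le (fun u => Real.iSup_le (fun _ => abs_fnStarHat_sub_fnStar_le hf n u ω)
      (by positivity)) (by positivity)
  have hCS : A ^ 2 ≤ n * ∑ i ∈ Finset.Icc 1 n, (Xlag c ε i ω - XlagHat c ε ρ i ω) ^ 2 := by
    simpa [A, sq_abs] using sq_sum_le_card_mul_sum_sq (s := Finset.Icc 1 n)
      (f := fun i => |Xlag c ε i ω - XlagHat c ε ρ i ω|)
  calc _ ≤ (K * ((n : ℝ)⁻¹ * A)) ^ 2 :=
        pow_le_pow_left₀ (Real.iSup_nonneg fun u => Real.iSup_nonneg fun _ => abs_nonneg _) hsup 2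
    _ = K ^ 2 / n ^ 2 * A ^ 2 := by ring
    _ ≤ K ^ 2 / n ^ 2 * (n * ∑ i ∈ Finset.Icc 1 n, (Xlag c ε i ω - XlagHat c ε ρ i ω) ^ 2) := by
        gcongr
    _ = _ := by
        rcases n.eq_zero_or_pos with rfl | hn
        · simp
        · field_simp

theorem Cond5.lintegral_enorm_sq_lt_top [MeasureSpace Ω] [IsFiniteMeasure (ℙ : Measure Ω)]
    {α : ℝ} (h5 : Cond5 ε α) (hm : Measurable (ε 0)) :
    ∫⁻ ω, ‖ε 0 ω‖ₑ ^ 2 < ⊤ := by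
  obtain ⟨hα, hint⟩ := h5
  have hLα : MemLp (ε 0) (ENNReal.ofReal α) := by
    refine (integrable_norm_rpow_iff hm.aestronglyMeasurable (by simp; linarith)
      ENNReal.ofReal_ne_top).1 ?_
    simpa [ENNReal.toReal_ofReal (by linarith : 0 ≤ α)] using hint
  have hL2 : MemLp (ε 0) 2 := hLα.mono_exponent <| by
    rw [← ENNReal.ofReal_ofNat]
    exact ENNReal.ofReal_le_ofReal hα
  simpa [HasFiniteIntegral, enorm_pow] using hL2.integrable_sq.hasFiniteIntegral

theorem Cond7.exists_lipschitzWith [MeasureSpace Ω] {fε fε' fε'' : ℝ → ℝ}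
    (h7 : Cond7 ε fε fε' fε'') : ∃ K : ℝ≥0, LipschitzWith K fε := by
  obtain ⟨hf0, -, hd1, -, M, hM⟩ := h7
  refine ⟨M.toNNReal, lipschitzWith_of_nnnorm_deriv_le (fun x => (hd1 x).differentiableAt)
    fun x => ?_⟩
  rw [(hd1 x).deriv, ← NNReal.coe_le_coe, coe_nnnorm, Real.norm_eq_abs]
  exact (by linarith [hM x, hf0 x, abs_nonneg (fε'' x)] : |fε' x| ≤ M).trans
    (Real.le_coe_toNNReal M)

theorem lintegral_ofReal_sq_iSup_le [MeasureSpace Ω] {fε : ℝ → ℝ} {K : ℝ≥0}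
    (hm : ∀ j, Measurable (ε j))
    (hid : ∀ j, IdentDistrib (ε j) (ε 0) (ℙ : Measure Ω) (ℙ : Measure Ω))
    (hc : Summable fun k => |c k|) (hf : LipschitzWith K fε) (n : ℕ) (s : Set ℝ) :
    ∫⁻ ω, ENNReal.ofReal ((⨆ u ∈ s, |fnStarHat c ε fε ρ n u ω - fnStar c ε fε n u ω|) ^ 2) ≤
      ENNReal.ofReal (K ^ 2 / n) * (∫⁻ ω, ‖ε 0 ω‖ₑ ^ 2) *
        ENNReal.ofReal (∑ i ∈ Finset.Icc 1 n, (∑' k, |c (k + trunc ρ i)|) ^ 2) := by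
  have hmeas : ∀ i, Measurable fun ω => truncTail c ε ρ i ω ^ 2 :=
    fun i => (measurable_truncTail hm i).pow_const 2
  have hpt : ∀ ω,
      ENNReal.ofReal ((⨆ u ∈ s, |fnStarHat c ε fε ρ n u ω - fnStar c ε fε n u ω|) ^ 2) ≤
        ENNReal.ofReal (K ^ 2 / n) * ∑ i ∈ Finset.Icc 1 n, truncTail c ε ρ i ω ^ 2 := by
    intro ω
    calc _ ≤ ENNReal.ofReal
            (K ^ 2 / n * ∑ i ∈ Finset.Icc 1 n, (Xlag c ε i ω - XlagHat c ε ρ i ω) ^ 2) :=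
          ENNReal.ofReal_le_ofReal (sq_iSup_abs_fnStarHat_sub_fnStar_le hf n s ω)
      _ = ENNReal.ofReal (K ^ 2 / n) *
            ∑ i ∈ Finset.Icc 1 n, ‖Xlag c ε i ω - XlagHat c ε ρ i ω‖ₑ ^ 2 := by
          rw [ENNReal.ofReal_mul (by positivity),
            ENNReal.ofReal_sum_of_nonneg fun i _ => sq_nonneg _]
          simp_rw [Real.enorm_eq_ofReal_abs, ← ENNReal.ofReal_pow (abs_nonneg _), sq_abs]
      _ ≤ _ := by
          gcongr with i hi
          exact enorm_Xlag_sub_XlagHat_le_truncTail (Finset.mem_Icc.1 hi).1 ω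
  calc _ ≤ ∫⁻ ω, ENNReal.ofReal (K ^ 2 / n) * ∑ i ∈ Finset.Icc 1 n, truncTail c ε ρ i ω ^ 2 :=
        lintegral_mono hpt
    _ = ENNReal.ofReal (K ^ 2 / n) * ∑ i ∈ Finset.Icc 1 n, ∫⁻ ω, truncTail c ε ρ i ω ^ 2 := by
        rw [lintegral_const_mul _ (Finset.measurable_sum _ fun i _ => hmeas i),
          lintegral_finsetSum _ fun i _ => hmeas i]
    _ ≤ ENNReal.ofReal (K ^ 2 / n) * ∑ i ∈ Finset.Icc 1 n,
          (∫⁻ ω, ‖ε 0 ω‖ₑ ^ 2) * ENNReal.ofReal ((∑' k, |c (k + trunc ρ i)|) ^ 2) := by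
        gcongr with i
        exact lintegral_truncTail_sq_le hm hid hc i
    _ = _ := by
        rw [← Finset.mul_sum, ← ENNReal.ofReal_sum_of_nonneg fun i _ => sq_nonneg _, mul_assoc]

/-- Equation (15): under (5), (6), (7),
`E sup_{x≤u≤y} |f̂_n*(u) − f_n*(u)|² ≤ C/n`. -/
theorem sup_sq_conditional_density_truncation
    {Ω : Type*} [MeasureSpace Ω] [IsProbabilityMeasure (ℙ : Measure Ω)]
    (ε : ℤ → Ω → ℝ) (c : ℕ → ℝ) (F fε fε' fε'' : ℝ → ℝ) (α ρ : ℝ)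
    (hsetup : Setup ε c F)
    (h5 : Cond5 ε α) (h6 : Cond6 c ρ) (h7 : Cond7 ε fε fε' fε'') :
    ∃ C : ℝ, ∀ n : ℕ, 1 ≤ n → ∀ x y : ℝ, x < y →
      ∫ ω, (⨆ u ∈ Set.Icc x y,
          |fnStarHat c ε fε ρ n u ω - fnStar c ε fε n u ω|) ^ 2 ∂(ℙ : Measure Ω) ≤
        C / n := by
  obtain ⟨⟨hm, -, hid⟩, -, hc, -, -⟩ := hsetup
  obtain ⟨K, hK⟩ := h7.exists_lipschitzWith
  set V := ∫⁻ ω, ‖ε 0 ω‖ₑ ^ 2 ∂(ℙ : Measure Ω)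
  have hV : V ≠ ⊤ := (h5.lintegral_enorm_sq_lt_top (hm 0)).ne
  set T : ℕ → ℝ := fun i => ∑' k, |c (k + trunc ρ i)|
  have hT : Summable fun i => T i ^ 2 := h6.summable_sq_tsum_abs_nat_add_trunc hc
  refine ⟨K ^ 2 * V.toReal * ∑' i, T i ^ 2, fun n _ x y _ => ?_⟩
  refine integral_le_of_lintegral_ofReal_le (fun ω => sq_nonneg _) (by positivity) ?_
  calc _ ≤ ENNReal.ofReal (K ^ 2 / n) * V * ENNReal.ofReal (∑ i ∈ Finset.Icc 1 n, T i ^ 2) :=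
        lintegral_ofReal_sq_iSup_le hm hid hc hK n _
    _ ≤ ENNReal.ofReal (K ^ 2 / n) * V * ENNReal.ofReal (∑' i, T i ^ 2) := by
        gcongr
        exact hT.sum_le_tsum _ fun i _ => sq_nonneg _
    _ = ENNReal.ofReal (K ^ 2 * V.toReal * (∑' i, T i ^ 2) / n) := by
        rw [← ENNReal.ofReal_toReal hV, ← ENNReal.ofReal_mul (by positivity),
          ← ENNReal.ofReal_mul (by positivity), ENNReal.toReal_ofReal ENNReal.toReal_nonneg]
        ring_nf

end

end BKpaper
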